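/- Let u : EuclideanSpace ℝ (Fin n) → ℝ be C³ and satisfy Δu(x) + Hess u(x)(∇u(x), ∇u(x)) = 0 for all x (exponential harmonicity). Then for every x: ⟪∇u(x), ∇(Δu)(x)⟫ + iteratedFDeriv ℝ 3 u x ![∇u(x), ∇u(x), ∇u(x)] = −2 ∑ⱼ (Hess u(x)(∇u(x), eⱼ))², i.e. minus twice the squared norm of the vector Hess u(x) applied to ∇u(x). -/

import Mathlib

/-!
By the equation, `Δu = -φ` with `φ y = D²u(y)(∇u y, ∇u y)`, so `⟪∇u, ∇(Δu)⟫ = -Dφ(x)(∇u x)`.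
Differentiating `φ`, the third derivative gives `D³u(x)(∇u, ∇u, ∇u)`, and the two terms where the
derivative hits a gradient coincide by symmetry of `D²u(x)`, each being `‖D²u(x)(∇u x)‖²`,
which Parseval writes as `∑ⱼ Hess u x (∇u x, eⱼ)²`.
-/

open scoped RealInnerProductSpace
open Real MeasureTheory

noncomputable def Hess {n : ℕ} (f : EuclideanSpace ℝ (Fin n) → ℝ)
    (x v w : EuclideanSpace ℝ (Fin n)) : ℝ :=
  iteratedFDeriv ℝ 2 f x ![v, w]

noncomputable def lap {n : ℕ} (f : EuclideanSpace ℝ (Fin n) → ℝ)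
    (x : EuclideanSpace ℝ (Fin n)) : ℝ :=
  ∑ i, Hess f x (EuclideanSpace.basisFun (Fin n) ℝ i) (EuclideanSpace.basisFun (Fin n) ℝ i)

noncomputable def divg {n : ℕ} (X : EuclideanSpace ℝ (Fin n) → EuclideanSpace ℝ (Fin n))
    (x : EuclideanSpace ℝ (Fin n)) : ℝ :=
  ∑ i, ⟪fderiv ℝ X x (EuclideanSpace.basisFun (Fin n) ℝ i), EuclideanSpace.basisFun (Fin n) ℝ i⟫

open InnerProductSpace

theorem iteratedFDeriv_three_apply {𝕜 E F : Type*} [NontriviallyNormedField 𝕜]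
    [NormedAddCommGroup E] [NormedSpace 𝕜 E] [NormedAddCommGroup F] [NormedSpace 𝕜 F]
    (f : E → F) (x : E) (m : Fin 3 → E) :
    iteratedFDeriv 𝕜 3 f x m = fderiv 𝕜 (fderiv 𝕜 (fderiv 𝕜 f)) x (m 0) (m 1) (m 2) := by
  rw [iteratedFDeriv_succ_apply_right, iteratedFDeriv_two_apply]
  rfl

theorem OrthonormalBasis.sum_sq_apply_eq_norm_sq {ι F : Type*} [Fintype ι]
    [NormedAddCommGroup F] [InnerProductSpace ℝ F]
    (b : OrthonormalBasis ι ℝ F) (L : F →L[ℝ] ℝ) : ∑ i, L (b i) ^ 2 = ‖L‖ ^ 2 := by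
  have : FiniteDimensional ℝ F := b.toBasis.finiteDimensional_of_finite
  rw [← (toDual ℝ F).symm.norm_map, ← real_inner_self_eq_norm_sq, ← b.sum_inner_mul_inner]
  simp_rw [toDual_symm_apply, real_inner_comm _ (b _), toDual_symm_apply, sq]

section Hilbert

variable {F : Type*} [NormedAddCommGroup F] [InnerProductSpace ℝ F] [CompleteSpace F]
  {f : F → ℝ} {x : F}

theorem HasFDerivAt.hasFDerivAt_gradient {f'' : F →L[ℝ] F →L[ℝ] ℝ}
    (h : HasFDerivAt (fderiv ℝ f) f'' x) :
    HasFDerivAt (gradient f)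
      ((toDual ℝ F).symm.toContinuousLinearEquiv.toContinuousLinearMap ∘L f'') x :=
  (toDual ℝ F).symm.toContinuousLinearEquiv.hasFDerivAt.comp x h

theorem fderiv_hessian_gradient_gradient (hf : ContDiffAt ℝ 3 f x) (w : F) :
    fderiv ℝ (fun y => fderiv ℝ (fderiv ℝ f) y (gradient f y) (gradient f y)) x w
      = fderiv ℝ (fderiv ℝ (fderiv ℝ f)) x w (gradient f x) (gradient f x)
        + 2 * ⟪(toDual ℝ F).symm (fderiv ℝ (fderiv ℝ f) x (gradient f x)),
            (toDual ℝ F).symm (fderiv ℝ (fderiv ℝ f) x w)⟫ := by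
  have hD1 : ContDiffAt ℝ 2 (fderiv ℝ f) x := hf.fderiv_right (by norm_num)
  have hD2 : HasFDerivAt (fderiv ℝ f) (fderiv ℝ (fderiv ℝ f) x) x :=
    (hD1.differentiableAt (by norm_num)).hasFDerivAt
  have hD3 : HasFDerivAt (fderiv ℝ (fderiv ℝ f)) (fderiv ℝ (fderiv ℝ (fderiv ℝ f)) x) x :=
    ((hD1.fderiv_right (m := 1) le_rfl).differentiableAt one_ne_zero).hasFDerivAt
  have hsymm : IsSymmSndFDerivAt ℝ f x :=
    hf.isSymmSndFDerivAt (by simp only [minSmoothness_of_isRCLikeNormedField]; norm_num)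
  rw [((hD3.clm_apply hD2.hasFDerivAt_gradient).clm_apply hD2.hasFDerivAt_gradient).fderiv]
  simp only [LinearIsometryEquiv.toContinuousLinearEquiv_symm, ContinuousLinearMap.flip_add,
    add_apply, ContinuousLinearMap.comp_apply, ContinuousLinearEquiv.coe_coe,
    LinearIsometryEquiv.coe_symm_toContinuousLinearEquiv, ContinuousLinearMap.flip_apply,
    hsymm _ (gradient f x), toDual_symm_apply]
  ring

end Hilbert

theorem Hess_eq_fderiv_fderiv {n : ℕ} (f : EuclideanSpace ℝ (Fin n) → ℝ)
    (x v w : EuclideanSpace ℝ (Fin n)) : Hess f x v w = fderiv ℝ (fderiv ℝ f) x v w := by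
  rw [Hess, iteratedFDeriv_two_apply]
  rfl

/-- Differentiating the exponential harmonicity equation in the direction `∇u`:
`⟪∇u, ∇(Δu)⟫ + (∇³u)(∇u,∇u,∇u) = −2 ∑ⱼ (Hess u(∇u, eⱼ))²`. -/
theorem stmt_8 {n : ℕ} (u : EuclideanSpace ℝ (Fin n) → ℝ) (hu : ContDiff ℝ 3 u)
    (hharm : ∀ x, lap u x + Hess u x (gradient u x) (gradient u x) = 0) :
    ∀ x, ⟪gradient u x, gradient (lap u) x⟫
        + iteratedFDeriv ℝ 3 u x ![gradient u x, gradient u x, gradient u x]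
      = -2 * ∑ j, (Hess u x (gradient u x) (EuclideanSpace.basisFun (Fin n) ℝ j)) ^ 2 := by
  intro x
  set v := gradient u x
  have hlap : lap u = fun y => -fderiv ℝ (fderiv ℝ u) y (gradient u y) (gradient u y) := by
    funext y
    rw [← Hess_eq_fderiv_fderiv]
    linarith [hharm y]
  calc ⟪v, gradient (lap u) x⟫ + iteratedFDeriv ℝ 3 u x ![v, v, v]
      = -fderiv ℝ (fun y => fderiv ℝ (fderiv ℝ u) y (gradient u y) (gradient u y)) x v
          + fderiv ℝ (fderiv ℝ (fderiv ℝ u)) x v v v := by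
        rw [real_inner_comm, inner_gradient_left, hlap, fderiv_fun_neg,
          iteratedFDeriv_three_apply]
        rfl
    _ = -2 * ‖fderiv ℝ (fderiv ℝ u) x v‖ ^ 2 := by
        rw [fderiv_hessian_gradient_gradient hu.contDiffAt, real_inner_self_eq_norm_sq,
          LinearIsometryEquiv.norm_map]
        ring
    _ = _ := by
        simp_rw [← (EuclideanSpace.basisFun (Fin n) ℝ).sum_sq_apply_eq_norm_sq,
          Hess_eq_fderiv_fderiv]
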